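/- arXiv:0712.0684 — 3 statements merged into one kernel-verified Lean document; each statement's English description precedes it below -/
import Mathlib

section
/- Let B be a Blaschke product with zero sequence {z_n} in the open unit disc, let ζ be a point on the unit circle, and let z be in the open unit disc with |z - ζ| < A·|z_n - ζ| for all n, where 0 < A < 1. Then log|B(z)| ≤ -C(A)·(1-|z|)·∑_n (1-|z_n|²)/|ζ - z_n|², where C(A) > 0 depends only on A. In particular one may take C(A) = (1-A)²/(2(1+A)²). -/
noncomputable section

open Complex MeasureTheory Filter Set
open scoped ENNReal Topology

def uDisc : Set ℂ := {z : ℂ | ‖z‖ < 1}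

def uCircle : Set ℂ := {z : ℂ | ‖z‖ = 1}

/-- The reproducing kernel of the model space `K²_Θ`. -/
def kernelK (Θ : ℂ → ℂ) (z w : ℂ) : ℂ :=
  (1 - (starRingEnd ℂ) (Θ z) * Θ w) / (1 - (starRingEnd ℂ) z * w)

/-- A single Blaschke factor, with the convention `|a|/a = 1` when `a = 0`. -/
def blaschkeFactor (a z : ℂ) : ℂ :=
  (if a = 0 then 1 else ((‖a‖ : ℝ) : ℂ) / a) * ((a - z) / (1 - (starRingEnd ℂ) a * z))

/-- The Blaschke product with zero sequence `a`. -/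
def blaschkeProd (a : ℕ → ℂ) (z : ℂ) : ℂ := ∏' n, blaschkeFactor (a n) z

/-- The singular inner function associated with a singular measure `ψ` on the circle. -/
def singInner (ψ : Measure ℂ) (z : ℂ) : ℂ := Complex.exp (-∫ τ, (τ + z) / (τ - z) ∂ψ)

/-- Normalized Lebesgue measure on the unit circle, as a measure on `ℂ`. -/
def circleMeasure : Measure ℂ :=
  Measure.map (fun θ : ℝ => Complex.exp (θ * Complex.I))
    ((ENNReal.ofReal (2 * Real.pi))⁻¹ • volume.restrict (Set.Ioc 0 (2 * Real.pi)))

/-- `f` has radial limit `L` at the boundary point `ζ`. -/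
def radialLimAt (f : ℂ → ℂ) (ζ L : ℂ) : Prop :=
  Tendsto (fun r : ℝ => f ((r : ℂ) * ζ)) (nhdsWithin 1 (Set.Iio 1)) (nhds L)

/-- Stolz angle at `ζ` with aperture `κ`. -/
def stolzAngle (ζ : ℂ) (κ : ℝ) : Set ℂ := {z : ℂ | ‖z - ζ‖ < κ * (1 - ‖z‖)}

/-- `f` has nontangential limit `L` at the boundary point `ζ`. -/
def NTLimAt (f : ℂ → ℂ) (ζ L : ℂ) : Prop :=
  ∀ κ : ℝ, 1 < κ → Tendsto f (nhdsWithin ζ (stolzAngle ζ κ ∩ uDisc)) (nhds L)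

/-- Membership in the Hardy space `H^p` (`1 ≤ p ≤ ∞`), for a function defined on the closed
disc whose values on the circle are its radial limits (a.e.). -/
structure MemHardy (p : ℝ≥0∞) (f : ℂ → ℂ) : Prop where
  anal : DifferentiableOn ℂ f uDisc
  bdd : ∃ M : ℝ≥0∞, M ≠ ⊤ ∧ ∀ r : ℝ, r ∈ Set.Ico (0:ℝ) 1 →
    eLpNorm (fun ζ => f ((r : ℂ) * ζ)) p circleMeasure ≤ M
  bv : ∀ᵐ ζ ∂circleMeasure, radialLimAt f ζ (f ζ)

/-- Membership in the model (star-invariant) subspace `K^p_Θ = H^p ∩ Θ ⋅ conj(H^p₀)`. -/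
def MemKp (p : ℝ≥0∞) (Θ f : ℂ → ℂ) : Prop :=
  MemHardy p f ∧ ∃ g, MemHardy p g ∧ g 0 = 0 ∧
    ∀ᵐ ζ ∂circleMeasure, f ζ = Θ ζ * (starRingEnd ℂ) (g ζ)

/-- An inner function, extended to the circle by its radial boundary values. -/
structure IsInner (Θ : ℂ → ℂ) : Prop where
  anal : DifferentiableOn ℂ Θ uDisc
  bdd : ∀ z ∈ uDisc, ‖Θ z‖ ≤ 1
  bv : ∀ᵐ ζ ∂circleMeasure, radialLimAt Θ ζ (Θ ζ)
  mod : ∀ᵐ ζ ∂circleMeasure, ‖Θ ζ‖ = 1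

/-- The sublevel set `Ω(Θ,ε) = {z ∈ D : |Θ(z)| < ε}`. -/
def levelSet (Θ : ℂ → ℂ) (ε : ℝ) : Set ℂ := {z | z ∈ uDisc ∧ ‖Θ z‖ < ε}

/-- The spectrum `σ(Θ)`: points of the closed disc where `liminf |Θ| = 0`. -/
def specInner (Θ : ℂ → ℂ) : Set ℂ :=
  {ζ : ℂ | ‖ζ‖ ≤ 1 ∧
    ∀ δ : ℝ, 0 < δ → ∃ z ∈ uDisc, ‖z - ζ‖ < δ ∧ ‖Θ z‖ < δ}

/-- Closed arc of the unit circle from angle `a` to angle `b`. -/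
def arcSet (a b : ℝ) : Set ℂ := (fun θ : ℝ => Complex.exp (θ * Complex.I)) '' Set.Icc a b

/-- Open arc of the unit circle from angle `a` to angle `b`. -/
def openArc (a b : ℝ) : Set ℂ := (fun θ : ℝ => Complex.exp (θ * Complex.I)) '' Set.Ioo a b

/-- Carleson square over the arc of angles `[a, b]`. -/
def carlesonSq (a b : ℝ) : Set ℂ :=
  (fun p : ℝ × ℝ => (p.1 : ℂ) * Complex.exp (p.2 * Complex.I)) ''
    (Set.Icc (1 - (b - a) / (2 * Real.pi)) 1 ×ˢ Set.Icc a b)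

/-- Distance between two subsets of `ℂ`. -/
def setDist (s t : Set ℂ) : ℝ := sInf (Set.image2 dist s t)

/-- The Ahern–Clark quantity `|Θ'(ζ)| = ∑ (1-|z_n|²)/|ζ-z_n|² + ∫ dψ(τ)/|ζ-τ|²`,
as an extended real number. -/
def acSum (a : ℕ → ℂ) (ψ : Measure ℂ) (ζ : ℂ) : ℝ≥0∞ :=
  (∑' n, ENNReal.ofReal ((1 - ‖a n‖ ^ 2) / ‖ζ - a n‖ ^ 2)) +
    ∫⁻ τ, ENNReal.ofReal (1 / ‖ζ - τ‖ ^ 2) ∂ψ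

/-! For a single factor `b = b_c(z)` one has `log |b| ≤ (|b|² - 1)/2` and
`1 - |b|² = (1 - |c|²)(1 - |z|²)/|1 - c̄z|²`. Since `|ζ| = 1`,
`|1 - c̄z| ≤ |1 - c̄ζ| + |c||z - ζ| = |ζ - c| + |c||z - ζ| ≤ (1 + A)|ζ - c|`, so that
`log |b_{z_n}(z)| ≤ -(1 - |z|)(1 - |z_n|²)/(2(1 + A)²|ζ - z_n|²)`. The Blaschke condition
makes `∑ log b_{z_n}(z)` converge, so `log |B(z)|` is the sum of these terms, and
`(1 - A)² ≤ 1` gives the stated constant.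
-/

open ComplexConjugate

section BlaschkeFactor

variable {c z : ℂ}

lemma norm_one_sub_conj_mul_sq_sub_norm_sub_sq (c z : ℂ) :
    ‖1 - conj c * z‖ ^ 2 - ‖c - z‖ ^ 2 = (1 - ‖c‖ ^ 2) * (1 - ‖z‖ ^ 2) := by
  simp only [Complex.sq_norm, Complex.normSq_apply, Complex.mul_re, Complex.mul_im,
    Complex.sub_re, Complex.sub_im, Complex.one_re, Complex.one_im,
    Complex.conj_re, Complex.conj_im]
  ring

lemma one_sub_norm_mul_le_norm_one_sub_conj_mul (c z : ℂ) :
    1 - ‖c‖ * ‖z‖ ≤ ‖1 - conj c * z‖ := by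
  simpa [Complex.norm_conj] using norm_sub_norm_le (1 : ℂ) (conj c * z)

lemma norm_one_sub_conj_mul_pos (h : ‖c‖ * ‖z‖ < 1) : 0 < ‖1 - conj c * z‖ :=
  (sub_pos.2 h).trans_le (one_sub_norm_mul_le_norm_one_sub_conj_mul c z)

lemma norm_blaschkeFactor (c z : ℂ) :
    ‖blaschkeFactor c z‖ = ‖c - z‖ / ‖1 - conj c * z‖ := by
  unfold blaschkeFactor
  rw [norm_mul, norm_div]
  split_ifs with h
  · simp
  · rw [norm_div, Complex.norm_real, norm_norm, div_self (norm_ne_zero_iff.2 h), one_mul]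

lemma blaschkeFactor_ne_zero (h : ‖c‖ * ‖z‖ < 1) (hcz : c ≠ z) : blaschkeFactor c z ≠ 0 := by
  rw [← norm_pos_iff, norm_blaschkeFactor]
  exact div_pos (norm_pos_iff.2 (sub_ne_zero.2 hcz)) (norm_one_sub_conj_mul_pos h)

lemma one_sub_norm_blaschkeFactor_sq (h : ‖c‖ * ‖z‖ < 1) :
    1 - ‖blaschkeFactor c z‖ ^ 2 =
      (1 - ‖c‖ ^ 2) * (1 - ‖z‖ ^ 2) / ‖1 - conj c * z‖ ^ 2 := by
  rw [norm_blaschkeFactor, div_pow, ← norm_one_sub_conj_mul_sq_sub_norm_sub_sq,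
    one_sub_div (pow_pos (norm_one_sub_conj_mul_pos h) 2).ne']

lemma one_sub_blaschkeFactor (hc : c ≠ 0) (h : 1 - conj c * z ≠ 0) :
    1 - blaschkeFactor c z = (1 - ‖c‖) * (c + ‖c‖ * z) / (c * (1 - conj c * z)) := by
  have hcc : conj c * c = (‖c‖ : ℂ) ^ 2 := by
    rw [mul_comm, Complex.mul_conj, Complex.normSq_eq_norm_sq]
    push_cast
    ring
  rw [blaschkeFactor, if_neg hc, div_mul_div_comm, one_sub_div (mul_ne_zero hc h)]
  congr 1
  linear_combination -z * hcc

lemma norm_blaschkeFactor_sub_one_le (hc : ‖c‖ ≤ 1) (hz : ‖z‖ < 1) :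
    ‖blaschkeFactor c z - 1‖ ≤ (1 + ‖z‖) / (1 - ‖z‖) * (1 - ‖c‖) := by
  have hz' : 0 < 1 - ‖z‖ := sub_pos.2 hz
  rcases eq_or_ne c 0 with rfl | hc0
  · have hle : 1 + ‖z‖ ≤ (1 + ‖z‖) / (1 - ‖z‖) := by
      rw [le_div_iff₀ hz']
      nlinarith [norm_nonneg z]
    have hb : blaschkeFactor 0 z - 1 = -(1 + z) := by
      simp only [blaschkeFactor, map_zero, zero_mul, sub_zero, div_one, ite_true]
      ring
    rw [hb, norm_neg, norm_zero, sub_zero, mul_one]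
    exact (norm_add_le _ _).trans (by rwa [norm_one])
  have hcz : ‖c‖ * ‖z‖ < 1 := mul_lt_one_of_nonneg_of_lt_one_right hc (norm_nonneg z) hz
  have hden : 1 - ‖z‖ ≤ ‖1 - conj c * z‖ :=
    le_trans (by nlinarith [norm_nonneg z]) (one_sub_norm_mul_le_norm_one_sub_conj_mul c z)
  have hnum : ‖c + ‖c‖ * z‖ ≤ ‖c‖ * (1 + ‖z‖) := by
    refine (norm_add_le _ _).trans_eq ?_
    rw [norm_mul, Complex.norm_real, norm_norm]
    ring
  have hcoef : ‖(1 : ℂ) - ‖c‖‖ = 1 - ‖c‖ := by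
    rw [← Complex.ofReal_one, ← Complex.ofReal_sub, Complex.norm_real, Real.norm_eq_abs,
      abs_of_nonneg (sub_nonneg.2 hc)]
  rw [norm_sub_rev, one_sub_blaschkeFactor hc0 (norm_pos_iff.1 (norm_one_sub_conj_mul_pos hcz)),
    norm_div, norm_mul, norm_mul, hcoef]
  calc (1 - ‖c‖) * ‖c + ‖c‖ * z‖ / (‖c‖ * ‖1 - conj c * z‖)
      ≤ (1 - ‖c‖) * (‖c‖ * (1 + ‖z‖)) / (‖c‖ * (1 - ‖z‖)) := by
        gcongr
    _ = (1 + ‖z‖) / (1 - ‖z‖) * (1 - ‖c‖) := by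
        field_simp

lemma norm_one_sub_conj_mul_le {ζ : ℂ} (hζ : ‖ζ‖ = 1) (c z : ℂ) :
    ‖1 - conj c * z‖ ≤ ‖ζ - c‖ + ‖c‖ * ‖z - ζ‖ := by
  have hζζ : ζ * conj ζ = 1 := by
    rw [Complex.mul_conj, Complex.normSq_eq_norm_sq, hζ]
    norm_num
  have hsplit : 1 - conj c * z = ζ * conj (ζ - c) + conj c * (ζ - z) := by
    rw [map_sub]
    linear_combination -hζζ
  rw [hsplit]
  refine (norm_add_le _ _).trans_eq ?_
  rw [norm_mul, norm_mul, hζ, one_mul, Complex.norm_conj, Complex.norm_conj, norm_sub_rev ζ z]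

end BlaschkeFactor

lemma log_le_sq_sub_one_div_two {x : ℝ} (hx : 0 < x) : Real.log x ≤ (x ^ 2 - 1) / 2 := by
  have h := Real.log_le_sub_one_of_pos (pow_pos hx 2)
  rw [Real.log_pow] at h
  push_cast at h
  linarith

lemma log_norm_blaschkeFactor_le {c z ζ : ℂ} {A : ℝ} (hc : ‖c‖ < 1) (hz : ‖z‖ < 1)
    (hcz : c ≠ z) (hζ : ‖ζ‖ = 1) (hA : 0 ≤ A) (hsep : ‖z - ζ‖ ≤ A * ‖ζ - c‖) :
    Real.log ‖blaschkeFactor c z‖ ≤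
      -(1 / (2 * (1 + A) ^ 2)) * (1 - ‖z‖) * ((1 - ‖c‖ ^ 2) / ‖ζ - c‖ ^ 2) := by
  have hcz1 : ‖c‖ * ‖z‖ < 1 := mul_lt_one_of_nonneg_of_lt_one_right hc.le (norm_nonneg z) hz
  have hζc : 0 < ‖ζ - c‖ := by
    rw [norm_pos_iff, sub_ne_zero]
    rintro rfl
    exact hc.ne hζ
  have hden : ‖1 - conj c * z‖ ≤ (1 + A) * ‖ζ - c‖ :=
    calc ‖1 - conj c * z‖ ≤ ‖ζ - c‖ + ‖c‖ * ‖z - ζ‖ := norm_one_sub_conj_mul_le hζ c z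
      _ ≤ ‖ζ - c‖ + 1 * (A * ‖ζ - c‖) := by gcongr
      _ = (1 + A) * ‖ζ - c‖ := by ring
  have hP : 0 ≤ 1 - ‖c‖ ^ 2 := by nlinarith [norm_nonneg c]
  have hX : 1 - ‖z‖ ≤ 1 - ‖z‖ ^ 2 := by nlinarith [norm_nonneg z]
  have hfactor : (1 - ‖c‖ ^ 2) * (1 - ‖z‖) / (2 * ((1 + A) * ‖ζ - c‖) ^ 2) ≤
      (1 - ‖blaschkeFactor c z‖ ^ 2) / 2 := by
    rw [one_sub_norm_blaschkeFactor_sq hcz1, div_div, mul_comm _ (2 : ℝ)]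
    have := norm_one_sub_conj_mul_pos hcz1
    gcongr
    exact mul_nonneg hP (hX.trans' (sub_nonneg.2 hz.le))
  calc Real.log ‖blaschkeFactor c z‖ ≤ (‖blaschkeFactor c z‖ ^ 2 - 1) / 2 :=
        log_le_sq_sub_one_div_two (norm_pos_iff.2 (blaschkeFactor_ne_zero hcz1 hcz))
    _ ≤ -((1 - ‖c‖ ^ 2) * (1 - ‖z‖) / (2 * ((1 + A) * ‖ζ - c‖) ^ 2)) := by linarith
    _ = -(1 / (2 * (1 + A) ^ 2)) * (1 - ‖z‖) * ((1 - ‖c‖ ^ 2) / ‖ζ - c‖ ^ 2) := by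
        field_simp

section BlaschkeProd

variable {a : ℕ → ℂ} {z : ℂ}

lemma summable_log_blaschkeFactor (ha : ∀ n, ‖a n‖ ≤ 1) (hBl : Summable fun n => 1 - ‖a n‖)
    (hz : ‖z‖ < 1) : Summable fun n => Complex.log (blaschkeFactor (a n) z) := by
  have hsub : Summable fun n => blaschkeFactor (a n) z - 1 :=
    Summable.of_norm_bounded (hBl.mul_left _)
      fun n => norm_blaschkeFactor_sub_one_le (ha n) hz
  simpa using Complex.summable_log_one_add_of_summable hsub

lemma hasSum_log_norm_blaschkeFactor (ha : ∀ n, ‖a n‖ ≤ 1)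
    (hBl : Summable fun n => 1 - ‖a n‖) (hz : ‖z‖ < 1) (hne : ∀ n, a n ≠ z) :
    HasSum (fun n => Real.log ‖blaschkeFactor (a n) z‖) (Real.log ‖blaschkeProd a z‖) := by
  have hlog := (summable_log_blaschkeFactor ha hBl hz).hasSum
  have hprod : blaschkeProd a z = Complex.exp (∑' n, Complex.log (blaschkeFactor (a n) z)) :=
    (Complex.hasProd_of_hasSum_log (fun n => blaschkeFactor_ne_zero
      (mul_lt_one_of_nonneg_of_lt_one_right (ha n) (norm_nonneg z) hz) (hne n)) hlog).tprod_eq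
  rw [hprod, Complex.norm_exp, Real.log_exp]
  simpa only [Complex.log_re] using Complex.hasSum_re hlog

end BlaschkeProd

lemma summable_one_sub_norm_sq_div {a : ℕ → ℂ} {ζ : ℂ} {δ : ℝ}
    (ha : ∀ n, ‖a n‖ ≤ 1) (hBl : Summable fun n => 1 - ‖a n‖) (hδ : 0 < δ)
    (hfar : ∀ n, δ ≤ ‖ζ - a n‖) :
    Summable fun n => (1 - ‖a n‖ ^ 2) / ‖ζ - a n‖ ^ 2 := by
  refine Summable.of_nonneg_of_le (fun n => ?_) (fun n => ?_) (hBl.mul_left (2 / δ ^ 2))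
  · have := ha n
    have := norm_nonneg (a n)
    exact div_nonneg (by nlinarith) (sq_nonneg _)
  · have h1 := ha n
    have h0 := norm_nonneg (a n)
    calc (1 - ‖a n‖ ^ 2) / ‖ζ - a n‖ ^ 2 ≤ (1 - ‖a n‖ ^ 2) / δ ^ 2 := by
          gcongr
          · nlinarith
          · exact hfar n
      _ ≤ 2 * (1 - ‖a n‖) / δ ^ 2 := by
          gcongr
          nlinarith
      _ = 2 / δ ^ 2 * (1 - ‖a n‖) := by ring

/-- `log|B(z)| ≤ -C(A)·(1-|z|)·∑_n (1-|z_n|²)/|ζ-z_n|²`, with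
`C(A) = (1-A)²/(2(1+A)²)`. -/
theorem stmt_2 (a : ℕ → ℂ) (ha : ∀ n, ‖a n‖ < 1)
    (hBl : Summable fun n => 1 - ‖a n‖)
    (ζ : ℂ) (hζ : ‖ζ‖ = 1) (z : ℂ) (hz : z ∈ uDisc)
    (A : ℝ) (hA0 : 0 < A) (hA1 : A < 1)
    (hsep : ∀ n, ‖z - ζ‖ < A * ‖a n - ζ‖) :
    Real.log (‖blaschkeProd a z‖) ≤
      -((1 - A) ^ 2 / (2 * (1 + A) ^ 2)) * (1 - ‖z‖) *
        ∑' n, (1 - ‖a n‖ ^ 2) / ‖ζ - a n‖ ^ 2 := by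
  have hz1 : ‖z‖ < 1 := hz
  have hsep' : ∀ n, ‖z - ζ‖ ≤ A * ‖ζ - a n‖ := fun n => norm_sub_rev ζ (a n) ▸ (hsep n).le
  have hdist : 0 < ‖z - ζ‖ := by
    rw [norm_pos_iff, sub_ne_zero]
    rintro rfl
    exact hz1.ne hζ
  have hfar : ∀ n, ‖z - ζ‖ ≤ ‖ζ - a n‖ := fun n =>
    (hsep' n).trans (mul_le_of_le_one_left (norm_nonneg _) hA1.le)
  have hne : ∀ n, a n ≠ z := fun n h => by
    have := hsep n
    rw [h] at this
    nlinarith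
  have ha' : ∀ n, ‖a n‖ ≤ 1 := fun n => (ha n).le
  have hsum := (summable_one_sub_norm_sq_div ha' hBl hdist hfar).hasSum
  have hbound := hasSum_le (fun n => log_norm_blaschkeFactor_le (ha n) hz1 (hne n) hζ hA0.le
    (hsep' n)) (hasSum_log_norm_blaschkeFactor ha' hBl hz1 hne) (hsum.mul_left _)
  have hC : (1 - A) ^ 2 / (2 * (1 + A) ^ 2) ≤ 1 / (2 * (1 + A) ^ 2) := by
    gcongr
    nlinarith
  have hS : 0 ≤ (1 - ‖z‖) * ∑' n, (1 - ‖a n‖ ^ 2) / ‖ζ - a n‖ ^ 2 :=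
    mul_nonneg (by linarith) (tsum_nonneg fun n => div_nonneg
      (by nlinarith [ha n, norm_nonneg (a n)]) (sq_nonneg _))
  refine hbound.trans ?_
  rw [mul_assoc, mul_assoc]
  exact mul_le_mul_of_nonneg_right (neg_le_neg hC) hS
end
end

section
/- With the Whitney arcs of the previous decomposition: setting F = ∪_k S(I_k) (union of Carleson squares over the arcs I_k) and G = closure(D) \ F, for any z ∈ G with z ≠ 0 one has dist(z/|z|, Ω(Θ,ε)) ≤ 6π(1 - |z|). -/
noncomputable section

open Complex MeasureTheory Filter Set
open scoped ENNReal Topology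

/-!
Write `ζ = z/|z|`. If `ζ ∈ σ(Θ)`, points of `Ω(Θ,ε)` accumulate at `ζ` and the distance is `0`.
Otherwise `ζ` lies on a Whitney arc `I_k`; since `z` is on the radius through `ζ` but outside
`S(I_k)`, the arc is short: `|I_k| < 2π(1 - |z|)`. Crossing `I_k` and then using the Whitney bound
`dist(I_k, Ω) ≤ 2|I_k|` gives `dist(ζ, Ω) ≤ 3|I_k| ≤ 6π(1 - |z|)`.
-/

open Metric

lemma dist_exp_mul_I_le (a b : ℝ) :
    dist (exp (a * I)) (exp (b * I)) ≤ dist a b := by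
  simpa [circleMap] using (lipschitzWith_circleMap 0 1).dist_le_mul a b

lemma dist_le_of_mem_arcSet {a b : ℝ} {ζ ξ : ℂ} (hζ : ζ ∈ arcSet a b) (hξ : ξ ∈ arcSet a b) :
    dist ζ ξ ≤ b - a := by
  obtain ⟨θ, ⟨hθa, hθb⟩, rfl⟩ := hζ
  obtain ⟨θ', ⟨hθ'a, hθ'b⟩, rfl⟩ := hξ
  refine (dist_exp_mul_I_le θ θ').trans ?_
  rw [Real.dist_eq, abs_le]
  constructor <;> linarith

lemma infDist_le_add_setDist {s t : Set ℂ} {ζ : ℂ} {D : ℝ} (hζ : ζ ∈ s)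
    (hD : ∀ ξ ∈ s, dist ζ ξ ≤ D) : infDist ζ t ≤ D + setDist s t := by
  rcases t.eq_empty_or_nonempty with rfl | ⟨w₀, hw₀⟩
  · -- both distances to `∅` are the junk value `0`, and `D ≥ dist ζ ζ = 0`
    simpa [setDist] using (dist_self ζ).symm.le.trans (hD ζ hζ)
  suffices infDist ζ t - D ≤ setDist s t by linarith
  refine le_csInf ⟨_, mem_image2_of_mem hζ hw₀⟩ ?_
  rintro _ ⟨ξ, hξ, w, hw, rfl⟩
  linarith [infDist_le_infDist_add_dist (x := ζ) (y := ξ) (s := t),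
    infDist_le_dist_of_mem (x := ξ) hw, hD ξ hξ]

lemma infDist_levelSet_eq_zero_of_mem_specInner {Θ : ℂ → ℂ} {ε : ℝ} {ζ : ℂ} (hε : 0 < ε)
    (hζ : ζ ∈ specInner Θ) : infDist ζ (levelSet Θ ε) = 0 := by
  refine infDist_zero_of_mem_closure (Metric.mem_closure_iff.2 fun δ hδ => ?_)
  obtain ⟨w, hw, hwζ, hΘw⟩ := hζ.2 (min δ ε) (lt_min hδ hε)
  refine ⟨w, ⟨hw, hΘw.trans_le (min_le_right _ _)⟩, ?_⟩
  rw [dist_comm, dist_eq]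
  exact hwζ.trans_le (min_le_left _ _)

lemma sub_lt_of_notMem_carlesonSq {a b : ℝ} {z : ℂ} (hz0 : z ≠ 0) (hz1 : ‖z‖ ≤ 1)
    (harc : z / (‖z‖ : ℂ) ∈ arcSet a b) (hz : z ∉ carlesonSq a b) :
    b - a < 2 * Real.pi * (1 - ‖z‖) := by
  obtain ⟨θ, hθ, hθz⟩ := harc
  have hnorm : ‖z‖ < 1 - (b - a) / (2 * Real.pi) := by
    refine lt_of_not_ge fun hge => hz ⟨(‖z‖, θ), ⟨⟨hge, hz1⟩, hθ⟩, ?_⟩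
    simp only [hθz]
    field_simp [norm_ne_zero_iff.2 hz0]
  have hlen := lt_sub_comm.1 hnorm
  rwa [div_lt_iff₀ Real.two_pi_pos, mul_comm] at hlen

theorem stmt_11_general (Θ : ℂ → ℂ) (ε : ℝ) (hε0 : 0 < ε)
    (s : Set ℕ) (α β : ℕ → ℝ)
    (hcover : (⋃ k ∈ s, arcSet (α k) (β k)) = uCircle \ specInner Θ)
    (hwhitney : ∀ k ∈ s,
      β k - α k ≤ setDist (arcSet (α k) (β k)) (levelSet Θ ε) ∧
      setDist (arcSet (α k) (β k)) (levelSet Θ ε) ≤ 2 * (β k - α k))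
    (z : ℂ) (hz1 : ‖z‖ ≤ 1)
    (hzG : z ∉ ⋃ k ∈ s, carlesonSq (α k) (β k)) (hz0 : z ≠ 0) :
    Metric.infDist (z / ((‖z‖ : ℝ) : ℂ)) (levelSet Θ ε) ≤
      6 * Real.pi * (1 - ‖z‖) := by
  by_cases hspec : z / (‖z‖ : ℂ) ∈ specInner Θ
  · rw [infDist_levelSet_eq_zero_of_mem_specInner hε0 hspec]
    exact mul_nonneg (by positivity) (sub_nonneg.2 hz1)
  have hunit : z / (‖z‖ : ℂ) ∈ uCircle := by
    simp [uCircle, norm_ne_zero_iff.2 hz0]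
  obtain ⟨k, hk, hζk⟩ := mem_iUnion₂.1 (hcover ▸ ⟨hunit, hspec⟩ :
    z / (‖z‖ : ℂ) ∈ ⋃ k ∈ s, arcSet (α k) (β k))
  have hshort := sub_lt_of_notMem_carlesonSq hz0 hz1 hζk
    fun h => hzG (mem_iUnion₂.2 ⟨k, hk, h⟩)
  calc infDist (z / (‖z‖ : ℂ)) (levelSet Θ ε)
      ≤ (β k - α k) + setDist (arcSet (α k) (β k)) (levelSet Θ ε) :=
        infDist_le_add_setDist hζk fun _ hξ => dist_le_of_mem_arcSet hζk hξ
    _ ≤ 6 * Real.pi * (1 - ‖z‖) := by linarith [(hwhitney k hk).2]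

/-- for `z ∈ G = closure(D) \ ∪ S(I_k)`, `z ≠ 0`, one has
`dist(z/|z|, Ω(Θ,ε)) ≤ 6π(1-|z|)`. -/
theorem stmt_11 (Θ : ℂ → ℂ) (hΘ : IsInner Θ) (ε : ℝ) (hε0 : 0 < ε) (hε1 : ε < 1)
    (s : Set ℕ) (α β : ℕ → ℝ)
    (harc : ∀ k ∈ s, α k < β k ∧ β k - α k ≤ 2 * Real.pi)
    (hcover : (⋃ k ∈ s, arcSet (α k) (β k)) = uCircle \ specInner Θ)
    (hwhitney : ∀ k ∈ s,
      β k - α k ≤ setDist (arcSet (α k) (β k)) (levelSet Θ ε) ∧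
      setDist (arcSet (α k) (β k)) (levelSet Θ ε) ≤ 2 * (β k - α k))
    (z : ℂ) (hz1 : ‖z‖ ≤ 1)
    (hzG : z ∉ ⋃ k ∈ s, carlesonSq (α k) (β k)) (hz0 : z ≠ 0) :
    Metric.infDist (z / ((‖z‖ : ℝ) : ℂ)) (levelSet Θ ε) ≤
      6 * Real.pi * (1 - ‖z‖) :=
  stmt_11_general Θ ε hε0 s α β hcover hwhitney z hz1 hzG hz0
end
end

section
/- Splitting Carleson measures relative to an inner function: Let Θ be inner, ε ∈ (0,1), and let μ be a finite Borel measure on closure(D) for which there is C > 0 with μ(S(I)) ≤ C|I| for every arc I whose Carleson square meets Ω(Θ,ε) (i.e., μ ∈ C(Θ)). Let {I_k} be Whitney arcs with |I_k| ≤ dist(I_k, Ω(Θ,ε)) ≤ 2|I_k| covering T \ σ(Θ), F = ∪_k S(I_k), G = closure(D) \ F. Then μ|_G is a Carleson measure, i.e., there exists C₃ with μ|_G(S(I)) ≤ C₃|I| for every arc I ⊂ T. -/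
noncomputable section

open Complex MeasureTheory Filter Set
open scoped ENNReal Topology

/-!
If a point `r e^{iθ}` of `S(I)` lies outside every Whitney square `S(I_k)`, then `e^{iθ}` is
within `4|I|` of `Ω(Θ,ε)`: either `e^{iθ} ∈ σ(Θ)`, or `e^{iθ}` lies on some `I_k`, the point
below `S(I_k)` forces `|I_k| < |I|`, and the Whitney condition puts `Ω(Θ,ε)` within `3|I_k|`
of `I_k`. Hence the square over the concentric enlargement `33 I` meets `Ω(Θ,ε)`, and
`μ(S(I) ∩ G) ≤ μ(S(33 I)) ≤ 33 C |I|`. Arcs with `|I| ≥ 1/8` are handled by `μ(ℂ) < ∞`.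
-/

lemma norm_exp_mul_I_sub_exp_mul_I_le (x y : ℝ) :
    ‖exp (x * I) - exp (y * I)‖ ≤ |x - y| := by
  have h : exp (x * I) - exp (y * I) = exp (y * I) * (exp (I * (x - y : ℝ)) - 1) := by
    rw [mul_sub, ← Complex.exp_add]; push_cast; ring_nf
  rw [h, norm_mul, norm_exp_ofReal_mul_I, one_mul]
  exact Real.norm_exp_I_mul_ofReal_sub_one_le

lemma abs_le_pi_div_two_mul_norm_exp_mul_I_sub_one {x : ℝ} (hx : |x| ≤ Real.pi) :
    |x| ≤ Real.pi / 2 * ‖exp (x * I) - 1‖ := by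
  have hπ := Real.pi_pos
  have hsin := Real.mul_abs_le_abs_sin (x := x / 2) (by rw [abs_div, abs_two]; linarith)
  rw [mul_comm (x : ℂ), norm_exp_I_mul_ofReal_sub_one, norm_mul, Real.norm_two,
    Real.norm_eq_abs]
  rw [abs_div, abs_two, div_mul_div_comm, div_le_iff₀ (by positivity)] at hsin
  nlinarith

lemma carlesonSq_mono {a b a' b' : ℝ} (ha : a' ≤ a) (hb : b ≤ b') :
    carlesonSq a b ⊆ carlesonSq a' b' := by
  rintro _ ⟨⟨r, θ⟩, ⟨⟨hr, hr1⟩, hθa, hθb⟩, rfl⟩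
  have hlen : (b - a) / (2 * Real.pi) ≤ (b' - a') / (2 * Real.pi) := by
    gcongr
  exact ⟨(r, θ), ⟨⟨by linarith, hr1⟩, ha.trans hθa, hθb.trans hb⟩, rfl⟩

lemma mem_carlesonSq_of_norm_sub_exp_le {a b θ δ : ℝ} {w : ℂ} (hθ : θ ∈ Icc a b)
    (hw : ‖w‖ ≤ 1) (hδ : δ < 1) (hwθ : ‖w - exp (θ * I)‖ ≤ δ) :
    w ∈ carlesonSq (a - 4 * δ) (b + 4 * δ) := by
  set ζ := exp (θ * I) with hζdef
  have hζ : ‖ζ‖ = 1 := norm_exp_ofReal_mul_I θ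
  have hζ0 : ζ ≠ 0 := Complex.exp_ne_zero _
  have hrad : 1 - ‖w‖ ≤ δ := by
    linarith [abs_norm_sub_norm_le ζ w, le_abs_self (‖ζ‖ - ‖w‖), norm_sub_rev w ζ]
  have hw0 : w ≠ 0 := by rintro rfl; rw [norm_zero] at hrad; linarith
  have hnw0 : (‖w‖ : ℂ) ≠ 0 := by exact_mod_cast norm_ne_zero_iff.2 hw0
  set t := arg (w / ζ)
  have hunit : exp (t * I) = w / ζ / ‖w‖ := by
    have h := norm_mul_exp_arg_mul_I (w / ζ)
    rw [norm_div, hζ, div_one] at h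
    rw [← h, mul_div_cancel_left₀ _ hnw0]
  have hpolar : (‖w‖ : ℂ) * exp ((θ + t : ℝ) * I) = w := by
    rw [ofReal_add, add_mul, Complex.exp_add, ← hζdef, hunit]
    field_simp
  -- `exp (t * I) = (w / ‖w‖) / ζ`, and radial projection onto the circle at most doubles the
  -- distance to `ζ`
  have hangle : ‖exp (t * I) - 1‖ ≤ 2 * δ := by
    have h : exp (t * I) - 1 = ((w - ζ) + (1 - ‖w‖ : ℂ) * (w / ‖w‖)) / ζ := by
      rw [hunit]; field_simp; ring
    have hw1 : ‖(1 - ‖w‖ : ℂ) * (w / ‖w‖)‖ = 1 - ‖w‖ := by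
      rw [norm_mul, norm_div, norm_real, norm_norm, div_self (norm_ne_zero_iff.2 hw0),
        mul_one, ← ofReal_one, ← ofReal_sub, norm_real, Real.norm_of_nonneg (by linarith)]
    rw [h, norm_div, hζ, div_one]
    linarith [norm_add_le (w - ζ) ((1 - ‖w‖ : ℂ) * (w / ‖w‖))]
  have ht : |t| ≤ 4 * δ := by
    have := abs_le_pi_div_two_mul_norm_exp_mul_I_sub_one (abs_arg_le_pi (w / ζ))
    nlinarith [Real.pi_le_four, Real.pi_pos, norm_nonneg (exp (t * I) - 1)]
  refine ⟨(‖w‖, θ + t), ⟨⟨?_, hw⟩, ?_, ?_⟩, hpolar⟩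
  · have hδ0 : 0 ≤ δ := (norm_nonneg _).trans hwθ
    have : δ ≤ (b + 4 * δ - (a - 4 * δ)) / (2 * Real.pi) := by
      rw [le_div_iff₀ (by positivity)]
      nlinarith [Real.pi_le_four, hθ.1.trans hθ.2]
    simp only
    linarith
  · linarith [hθ.1, (abs_le.1 ht).1]
  · linarith [hθ.2, (abs_le.1 ht).2]

lemma exists_dist_lt_of_setDist_lt {s t : Set ℂ} {c : ℝ} (h0 : 0 < setDist s t)
    (hc : setDist s t < c) : ∃ x ∈ s, ∃ y ∈ t, dist x y < c := by
  have hne : (image2 dist s t).Nonempty := by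
    by_contra h
    rw [not_nonempty_iff_eq_empty] at h
    simp [setDist, h] at h0
  have hbdd : BddBelow (image2 dist s t) :=
    ⟨0, by rintro _ ⟨x, -, y, -, rfl⟩; exact dist_nonneg⟩
  obtain ⟨_, ⟨x, hx, y, hy, rfl⟩, hxy⟩ := (csInf_lt_iff hbdd hne).1 hc
  exact ⟨x, hx, y, hy, hxy⟩

lemma exists_norm_sub_lt_of_mem_arcSet {Ω : Set ℂ} {α β c : ℝ} {ζ : ℂ}
    (h0 : 0 < setDist (arcSet α β) Ω) (hc : setDist (arcSet α β) Ω < c)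
    (hζ : ζ ∈ arcSet α β) : ∃ w ∈ Ω, ‖w - ζ‖ < c + (β - α) := by
  obtain ⟨_, ⟨φ, hφ, rfl⟩, w, hw, hxw⟩ := exists_dist_lt_of_setDist_lt h0 hc
  obtain ⟨ψ, hψ, rfl⟩ := hζ
  have hchord : ‖exp (φ * I) - exp (ψ * I)‖ ≤ β - α :=
    (norm_exp_mul_I_sub_exp_mul_I_le φ ψ).trans
      (abs_sub_le_iff.2 ⟨by linarith [hφ.2, hψ.1], by linarith [hφ.1, hψ.2]⟩)
  rw [dist_eq_norm, norm_sub_rev] at hxw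
  exact ⟨w, hw, by linarith [norm_sub_le_norm_sub_add_norm_sub w (exp (φ * I)) (exp (ψ * I))]⟩

lemma lt_of_mul_exp_notMem_carlesonSq {α β r θ : ℝ} (hr : r ≤ 1)
    (hθ : exp (θ * I) ∈ arcSet α β) (hz : (r : ℂ) * exp (θ * I) ∉ carlesonSq α β) :
    r < 1 - (β - α) / (2 * Real.pi) := by
  obtain ⟨φ, hφ, hφθ⟩ := hθ
  by_contra! h
  exact hz ⟨(r, φ), ⟨⟨h, hr⟩, hφ⟩, by simp only [hφθ]⟩

section WhitneyCover

variable {Θ : ℂ → ℂ} {ε : ℝ} {s : Set ℕ} {α β : ℕ → ℝ}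

lemma exists_mem_levelSet_near_of_notMem_whitneySquares (hε : 0 < ε)
    (harc : ∀ k ∈ s, α k < β k)
    (hcover : (⋃ k ∈ s, arcSet (α k) (β k)) = uCircle \ specInner Θ)
    (hwhitney : ∀ k ∈ s,
      β k - α k ≤ setDist (arcSet (α k) (β k)) (levelSet Θ ε) ∧
      setDist (arcSet (α k) (β k)) (levelSet Θ ε) ≤ 2 * (β k - α k))
    {L r θ : ℝ} (hL : 0 < L) (hr : r ∈ Icc (1 - L / (2 * Real.pi)) 1)
    (hz : (r : ℂ) * exp (θ * I) ∉ ⋃ k ∈ s, carlesonSq (α k) (β k)) :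
    ∃ w ∈ levelSet Θ ε, ‖w - exp (θ * I)‖ ≤ 4 * L := by
  by_cases hspec : exp (θ * I) ∈ specInner Θ
  · obtain ⟨w, hwD, hwθ, hwΘ⟩ := hspec.2 (min ε (4 * L)) (by positivity)
    exact ⟨w, ⟨hwD, hwΘ.trans_le (min_le_left _ _)⟩, hwθ.le.trans (min_le_right _ _)⟩
  have hcov : exp (θ * I) ∈ ⋃ k ∈ s, arcSet (α k) (β k) :=
    hcover ▸ ⟨norm_exp_ofReal_mul_I θ, hspec⟩
  obtain ⟨k, hk, hθk⟩ := mem_iUnion₂.1 hcov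
  have hrk := lt_of_mul_exp_notMem_carlesonSq hr.2 hθk fun h => hz (mem_iUnion₂.2 ⟨k, hk, h⟩)
  have hlen : β k - α k < L := by
    have := hr.1.trans_lt hrk
    rwa [sub_lt_sub_iff_left, div_lt_div_iff_of_pos_right (by positivity)] at this
  have hk0 := harc k hk
  obtain ⟨hlow, hup⟩ := hwhitney k hk
  obtain ⟨w, hw, hwθ⟩ := exists_norm_sub_lt_of_mem_arcSet (c := 3 * (β k - α k))
    (by linarith) (by linarith) hθk
  exact ⟨w, hw, by linarith⟩

lemma inter_levelSet_nonempty_of_diff_whitneySquares_nonempty (hε : 0 < ε)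
    (harc : ∀ k ∈ s, α k < β k)
    (hcover : (⋃ k ∈ s, arcSet (α k) (β k)) = uCircle \ specInner Θ)
    (hwhitney : ∀ k ∈ s,
      β k - α k ≤ setDist (arcSet (α k) (β k)) (levelSet Θ ε) ∧
      setDist (arcSet (α k) (β k)) (levelSet Θ ε) ≤ 2 * (β k - α k))
    {a b : ℝ} (hab : a < b) (hsmall : b - a < 1 / 4)
    (hG : (carlesonSq a b \ ⋃ k ∈ s, carlesonSq (α k) (β k)).Nonempty) :
    (carlesonSq (a - 16 * (b - a)) (b + 16 * (b - a)) ∩ levelSet Θ ε).Nonempty := by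
  obtain ⟨_, ⟨⟨r, θ⟩, ⟨hr, hθ⟩, rfl⟩, hz⟩ := hG
  obtain ⟨w, hw, hwθ⟩ :=
    exists_mem_levelSet_near_of_notMem_whitneySquares hε harc hcover hwhitney (sub_pos.2 hab) hr hz
  have hw1 : ‖w‖ ≤ 1 := hw.1.le
  refine ⟨w, ?_, hw⟩
  convert mem_carlesonSq_of_norm_sub_exp_le hθ hw1 (by linarith) hwθ using 2 <;> ring

end WhitneyCover

lemma measure_le_ofReal_div_mul {X : Type*} [MeasurableSpace X] (μ : Measure X)
    [IsFiniteMeasure μ] {δ L : ℝ} (hδ : 0 < δ) (hL : δ ≤ L) (t : Set X) :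
    μ t ≤ ENNReal.ofReal ((μ univ).toReal / δ * L) :=
  calc μ t ≤ μ univ := measure_mono (subset_univ t)
    _ = ENNReal.ofReal (μ univ).toReal := (ENNReal.ofReal_toReal (measure_ne_top μ _)).symm
    _ ≤ ENNReal.ofReal ((μ univ).toReal / δ * L) := by
      gcongr
      rw [div_mul_eq_mul_div, le_div_iff₀ hδ]
      gcongr

theorem stmt_19_general (Θ : ℂ → ℂ) (ε : ℝ) (hε0 : 0 < ε)
    (μ : Measure ℂ) [IsFiniteMeasure μ]
    (C : ℝ) (hC : 0 < C)
    (hVT : ∀ a b : ℝ, a < b → b - a ≤ 2 * Real.pi →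
      (carlesonSq a b ∩ levelSet Θ ε).Nonempty →
      μ (carlesonSq a b) ≤ ENNReal.ofReal (C * (b - a)))
    (s : Set ℕ) (α β : ℕ → ℝ)
    (harc : ∀ k ∈ s, α k < β k ∧ β k - α k ≤ 2 * Real.pi)
    (hcover : (⋃ k ∈ s, arcSet (α k) (β k)) = uCircle \ specInner Θ)
    (hwhitney : ∀ k ∈ s,
      β k - α k ≤ setDist (arcSet (α k) (β k)) (levelSet Θ ε) ∧
      setDist (arcSet (α k) (β k)) (levelSet Θ ε) ≤ 2 * (β k - α k)) :
    ∃ C₃ : ℝ, 0 < C₃ ∧ ∀ a b : ℝ, a < b → b - a ≤ 2 * Real.pi →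
      μ (carlesonSq a b ∩
          ({z : ℂ | ‖z‖ ≤ 1} \ ⋃ k ∈ s, carlesonSq (α k) (β k))) ≤
        ENNReal.ofReal (C₃ * (b - a)) := by
  set M := (μ univ).toReal
  refine ⟨33 * C + 8 * M, by positivity, fun a b hab hb => ?_⟩
  set G := {z : ℂ | ‖z‖ ≤ 1} \ ⋃ k ∈ s, carlesonSq (α k) (β k)
  rcases lt_or_ge (b - a) (1 / 8) with hsmall | hlarge
  · rcases (carlesonSq a b ∩ G).eq_empty_or_nonempty with hempty | hne
    · simp [hempty]
    have hΩ := inter_levelSet_nonempty_of_diff_whitneySquares_nonempty hε0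
      (fun k hk => (harc k hk).1) hcover hwhitney hab (by linarith)
      (hne.mono fun z hz => ⟨hz.1, hz.2.2⟩)
    calc μ (carlesonSq a b ∩ G)
        ≤ μ (carlesonSq (a - 16 * (b - a)) (b + 16 * (b - a))) :=
          measure_mono (inter_subset_left.trans (carlesonSq_mono (by linarith) (by linarith)))
      _ ≤ ENNReal.ofReal (C * (b + 16 * (b - a) - (a - 16 * (b - a)))) :=
          hVT _ _ (by linarith) (by linarith [Real.pi_gt_three]) hΩ
      _ ≤ ENNReal.ofReal ((33 * C + 8 * M) * (b - a)) := by
          refine ENNReal.ofReal_le_ofReal ?_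
          nlinarith [ENNReal.toReal_nonneg (a := μ univ)]
  · calc μ (carlesonSq a b ∩ G) ≤ ENNReal.ofReal (M / (1 / 8) * (b - a)) :=
          measure_le_ofReal_div_mul μ (by norm_num) hlarge _
      _ ≤ ENNReal.ofReal ((33 * C + 8 * M) * (b - a)) := by
          refine ENNReal.ofReal_le_ofReal ?_
          nlinarith

/-- splitting Carleson measures: if `μ ∈ C(Θ)` (Carleson condition on
squares meeting `Ω(Θ,ε)`), and `{I_k}` are Whitney arcs with `F = ∪ S(I_k)`,
`G = closure(D) \ F`, then `μ|_G` is a Carleson measure. -/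
theorem stmt_19 (Θ : ℂ → ℂ) (hΘ : IsInner Θ) (ε : ℝ) (hε0 : 0 < ε) (hε1 : ε < 1)
    (μ : Measure ℂ) [IsFiniteMeasure μ] (hμd : μ {z : ℂ | 1 < ‖z‖} = 0)
    (C : ℝ) (hC : 0 < C)
    (hVT : ∀ a b : ℝ, a < b → b - a ≤ 2 * Real.pi →
      (carlesonSq a b ∩ levelSet Θ ε).Nonempty →
      μ (carlesonSq a b) ≤ ENNReal.ofReal (C * (b - a)))
    (s : Set ℕ) (α β : ℕ → ℝ)
    (harc : ∀ k ∈ s, α k < β k ∧ β k - α k ≤ 2 * Real.pi)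
    (hcover : (⋃ k ∈ s, arcSet (α k) (β k)) = uCircle \ specInner Θ)
    (hwhitney : ∀ k ∈ s,
      β k - α k ≤ setDist (arcSet (α k) (β k)) (levelSet Θ ε) ∧
      setDist (arcSet (α k) (β k)) (levelSet Θ ε) ≤ 2 * (β k - α k)) :
    ∃ C₃ : ℝ, 0 < C₃ ∧ ∀ a b : ℝ, a < b → b - a ≤ 2 * Real.pi →
      μ (carlesonSq a b ∩
          ({z : ℂ | ‖z‖ ≤ 1} \ ⋃ k ∈ s, carlesonSq (α k) (β k))) ≤
        ENNReal.ofReal (C₃ * (b - a)) :=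
  stmt_19_general Θ ε hε0 μ C hC hVT s α β harc hcover hwhitney
end
end
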